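/- Let v1, v2, y be jointly distributed random variables and z1 satisfy I(y; z1 | v1, v2) = 0 and I(y; v1 | v2) = 0 (v1 is redundant with respect to v2 for y). If z1 is sufficient for v2, i.e., I(v1; v2 | z1) = 0, then z1 is sufficient for y, i.e., I(v1; y | z1) = 0. -/

import Mathlib

open scoped BigOperators

/-- Conditional mutual information I(X;Y|Z) for a finite probability space
given by a pmf `p` on `Ω`. -/
noncomputable def condMI {Ω A B C : Type} [Fintype Ω] [Fintype A] [Fintype B] [Fintype C]
    [DecidableEq A] [DecidableEq B] [DecidableEq C]
    (p : Ω → ℝ) (X : Ω → A) (Y : Ω → B) (Z : Ω → C) : ℝ :=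
  ∑ a : A, ∑ b : B, ∑ c : C,
    (∑ ω : Ω, if X ω = a ∧ Y ω = b ∧ Z ω = c then p ω else 0) *
      Real.log
        ((∑ ω : Ω, if X ω = a ∧ Y ω = b ∧ Z ω = c then p ω else 0) *
            (∑ ω : Ω, if Z ω = c then p ω else 0) /
          ((∑ ω : Ω, if X ω = a ∧ Z ω = c then p ω else 0) *
            (∑ ω : Ω, if Y ω = b ∧ Z ω = c then p ω else 0)))

/-- Mutual information I(X;Y) as conditional mutual information given a constant. -/
noncomputable def mi {Ω A B : Type} [Fintype Ω] [Fintype A] [Fintype B]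
    [DecidableEq A] [DecidableEq B] (p : Ω → ℝ) (X : Ω → A) (Y : Ω → B) : ℝ :=
  condMI p X Y (fun _ => ())

/-!
The argument applies one rule twice. By the chain rule
`I(X; (Y,V) | Z) = I(X; V | Z) + I(X; Y | (V,Z))` and nonnegativity,
`I(X; (Y,V) | Z) = 0` iff `I(X; V | Z) = 0` and `I(X; Y | (V,Z)) = 0`.
With `X = y` the hypotheses give `I(y; (z1,v1) | v2) = 0`, hence `I(y; v1 | (z1,v2)) = 0`.
With `X = v1` this and the sufficiency of `z1` give `I(v1; (v2,y) | z1) = 0`,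
hence `I(v1; y | z1) = 0`.

The chain rule holds term by term once `I(X; Y | Z)` is written as the `p`-average of the
pointwise log-ratio: every event containing an atom `ω` with `p ω > 0` has positive mass, so the
logarithm splits. Nonnegativity is Gibbs' inequality via `log x ≥ 1 - 1/x`.
-/

section eventMass

variable {Ω E : Type} [Fintype Ω] (p : Ω → ℝ)

def eventMass (Q : Ω → Prop) [DecidablePred Q] : ℝ :=
  ∑ ω : Ω, if Q ω then p ω else 0

variable {p}

theorem eventMass_nonneg (hp : ∀ ω, 0 ≤ p ω) (Q : Ω → Prop) [DecidablePred Q] :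
    0 ≤ eventMass p Q :=
  Finset.sum_nonneg fun ω _ => by split_ifs <;> simp [hp ω]

theorem eventMass_mono (hp : ∀ ω, 0 ≤ p ω) {Q R : Ω → Prop} [DecidablePred Q] [DecidablePred R]
    (h : ∀ ω, Q ω → R ω) : eventMass p Q ≤ eventMass p R :=
  Finset.sum_le_sum fun ω _ => by
    by_cases hQ : Q ω
    · simp [hQ, h ω hQ]
    · split_ifs <;> simp [hp ω]

theorem le_eventMass (hp : ∀ ω, 0 ≤ p ω) {Q : Ω → Prop} [DecidablePred Q] {ω : Ω} (hω : Q ω) :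
    p ω ≤ eventMass p Q := by
  have := Finset.single_le_sum (f := fun ω' => if Q ω' then p ω' else 0)
    (fun ω' _ => by split_ifs <;> simp [hp ω']) (Finset.mem_univ ω)
  simpa [eventMass, hω] using this

variable (p) [Fintype E] [DecidableEq E]

theorem sum_eventMass_and (V : Ω → E) (Q : Ω → Prop) [DecidablePred Q] :
    ∑ e : E, eventMass p (fun ω => V ω = e ∧ Q ω) = eventMass p Q := by
  unfold eventMass
  rw [Finset.sum_comm]
  refine Finset.sum_congr rfl fun ω _ => ?_
  by_cases h : Q ω <;> simp [h]

theorem sum_eventMass_mul (V : Ω → E) (f : E → ℝ) :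
    ∑ e : E, eventMass p (fun ω => V ω = e) * f e = ∑ ω : Ω, p ω * f (V ω) := by
  simp only [eventMass, Finset.sum_mul, ite_mul, zero_mul]
  rw [Finset.sum_comm]
  simp

end eventMass

theorem sub_mul_div_le_mul_log {f g h k : ℝ} (hf : 0 ≤ f) (hfg : f ≤ g) (hfh : f ≤ h)
    (hgk : g ≤ k) : f - g * h / k ≤ f * Real.log (f * k / (g * h)) := by
  have hg : 0 ≤ g := hf.trans hfg
  have hh : 0 ≤ h := hf.trans hfh
  have hk : 0 ≤ k := hg.trans hgk
  rcases hf.eq_or_lt with rfl | hf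
  · simp only [zero_sub, zero_mul, neg_nonpos]
    positivity
  · have := hf.trans_le hfg
    have := hf.trans_le hfh
    have := hf.trans_le (hfg.trans hgk)
    have hlog := Real.one_sub_inv_le_log_of_pos (x := f * k / (g * h)) (by positivity)
    calc f - g * h / k = f * (1 - (f * k / (g * h))⁻¹) := by field_simp
      _ ≤ _ := mul_le_mul_of_nonneg_left hlog hf.le

section pointwise

variable {Ω A B C : Type} [Fintype Ω] [DecidableEq A] [DecidableEq B] [DecidableEq C]
  (p : Ω → ℝ)

noncomputable def pointwiseCondMI (X : Ω → A) (Y : Ω → B) (Z : Ω → C) (ω : Ω) : ℝ :=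
  Real.log
    (eventMass p (fun ω' => X ω' = X ω ∧ Y ω' = Y ω ∧ Z ω' = Z ω) *
        eventMass p (fun ω' => Z ω' = Z ω) /
      (eventMass p (fun ω' => X ω' = X ω ∧ Z ω' = Z ω) *
        eventMass p (fun ω' => Y ω' = Y ω ∧ Z ω' = Z ω)))

theorem pointwiseCondMI_congr {A' B' C' : Type} [DecidableEq A'] [DecidableEq B'] [DecidableEq C']
    {X : Ω → A} {Y : Ω → B} {Z : Ω → C} {X' : Ω → A'} {Y' : Ω → B'} {Z' : Ω → C'}
    (hX : ∀ ω ω', X ω' = X ω ↔ X' ω' = X' ω) (hY : ∀ ω ω', Y ω' = Y ω ↔ Y' ω' = Y' ω)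
    (hZ : ∀ ω ω', Z ω' = Z ω ↔ Z' ω' = Z' ω) (ω : Ω) :
    pointwiseCondMI p X Y Z ω = pointwiseCondMI p X' Y' Z' ω := by
  simp only [pointwiseCondMI, hX ω, hY ω, hZ ω]

theorem pointwiseCondMI_comm (X : Ω → A) (Y : Ω → B) (Z : Ω → C) (ω : Ω) :
    pointwiseCondMI p X Y Z ω = pointwiseCondMI p Y X Z ω := by
  simp only [pointwiseCondMI, and_left_comm (a := X _ = X ω),
    mul_comm (eventMass p fun ω' => X ω' = X ω ∧ _)]

variable {p}

theorem pointwiseCondMI_prod {W : Type} [DecidableEq W] (hp : ∀ ω, 0 ≤ p ω)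
    (X : Ω → A) (Y : Ω → B) (V : Ω → W) (Z : Ω → C) {ω : Ω} (hω : 0 < p ω) :
    pointwiseCondMI p X (fun ω => (Y ω, V ω)) Z ω
      = pointwiseCondMI p X V Z ω + pointwiseCondMI p X Y (fun ω => (V ω, Z ω)) ω := by
  have ne : ∀ (Q : Ω → Prop) [DecidablePred Q], Q ω → eventMass p Q ≠ 0 :=
    fun Q _ hQ => (hω.trans_le (le_eventMass hp hQ)).ne'
  simp only [pointwiseCondMI, Prod.mk.injEq, and_assoc]
  rw [← Real.log_mul (by simp [ne]) (by simp [ne])]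
  congr 1
  field_simp [ne]

end pointwise

section condMI

variable {Ω A B C : Type} [Fintype Ω] [Fintype A] [Fintype B] [Fintype C]
  [DecidableEq A] [DecidableEq B] [DecidableEq C] (p : Ω → ℝ)

theorem sum_eventMass_mul₃ (X : Ω → A) (Y : Ω → B) (Z : Ω → C) (g : A → B → C → ℝ) :
    ∑ a : A, ∑ b : B, ∑ c : C,
        eventMass p (fun ω => X ω = a ∧ Y ω = b ∧ Z ω = c) * g a b c
      = ∑ ω : Ω, p ω * g (X ω) (Y ω) (Z ω) := by
  rw [← sum_eventMass_mul p (fun ω => (X ω, Y ω, Z ω)) fun e => g e.1 e.2.1 e.2.2]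
  simp only [Fintype.sum_prod_type, Prod.mk.injEq]

theorem sum_eventMass_mul_eventMass_div (X : Ω → A) (Y : Ω → B) (Z : Ω → C) :
    ∑ a : A, ∑ b : B, ∑ c : C,
        eventMass p (fun ω => X ω = a ∧ Z ω = c) * eventMass p (fun ω => Y ω = b ∧ Z ω = c) /
          eventMass p (fun ω => Z ω = c)
      = ∑ ω : Ω, p ω := by
  rw [Finset.sum_comm_cycle]
  simp only [← Finset.sum_div, ← Finset.sum_mul_sum, sum_eventMass_and, mul_self_div_self]
  simpa using sum_eventMass_mul p Z fun _ => 1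

theorem condMI_eq_sum_pointwiseCondMI (X : Ω → A) (Y : Ω → B) (Z : Ω → C) :
    condMI p X Y Z = ∑ ω : Ω, p ω * pointwiseCondMI p X Y Z ω :=
  sum_eventMass_mul₃ p X Y Z fun a b c => Real.log
    (eventMass p (fun ω => X ω = a ∧ Y ω = b ∧ Z ω = c) * eventMass p (fun ω => Z ω = c) /
      (eventMass p (fun ω => X ω = a ∧ Z ω = c) * eventMass p (fun ω => Y ω = b ∧ Z ω = c)))

theorem condMI_congr {A' B' C' : Type} [Fintype A'] [Fintype B'] [Fintype C']
    [DecidableEq A'] [DecidableEq B'] [DecidableEq C']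
    {X : Ω → A} {Y : Ω → B} {Z : Ω → C} {X' : Ω → A'} {Y' : Ω → B'} {Z' : Ω → C'}
    (hX : ∀ ω ω', X ω' = X ω ↔ X' ω' = X' ω) (hY : ∀ ω ω', Y ω' = Y ω ↔ Y' ω' = Y' ω)
    (hZ : ∀ ω ω', Z ω' = Z ω ↔ Z' ω' = Z' ω) :
    condMI p X Y Z = condMI p X' Y' Z' := by
  simp only [condMI_eq_sum_pointwiseCondMI, pointwiseCondMI_congr p hX hY hZ]

theorem condMI_comm (X : Ω → A) (Y : Ω → B) (Z : Ω → C) :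
    condMI p X Y Z = condMI p Y X Z := by
  simp only [condMI_eq_sum_pointwiseCondMI, pointwiseCondMI_comm p X Y]

variable {W : Type} [Fintype W] [DecidableEq W]

theorem condMI_prod_comm_right (X : Ω → A) (Y : Ω → B) (V : Ω → W) (Z : Ω → C) :
    condMI p X (fun ω => (Y ω, V ω)) Z = condMI p X (fun ω => (V ω, Y ω)) Z :=
  condMI_congr p (fun _ _ => Iff.rfl) (fun _ _ => by simp only [Prod.mk.injEq, and_comm])
    fun _ _ => Iff.rfl

theorem condMI_prod_comm_cond (X : Ω → A) (Y : Ω → B) (V : Ω → W) (Z : Ω → C) :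
    condMI p X Y (fun ω => (V ω, Z ω)) = condMI p X Y (fun ω => (Z ω, V ω)) :=
  condMI_congr p (fun _ _ => Iff.rfl) (fun _ _ => Iff.rfl)
    fun _ _ => by simp only [Prod.mk.injEq, and_comm]

variable {p}

theorem condMI_prod_eq_add (hp : ∀ ω, 0 ≤ p ω) (X : Ω → A) (Y : Ω → B) (V : Ω → W) (Z : Ω → C) :
    condMI p X (fun ω => (Y ω, V ω)) Z
      = condMI p X V Z + condMI p X Y (fun ω => (V ω, Z ω)) := by
  simp only [condMI_eq_sum_pointwiseCondMI, ← Finset.sum_add_distrib, ← mul_add]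
  refine Finset.sum_congr rfl fun ω _ => ?_
  rcases (hp ω).eq_or_lt with hω | hω
  · simp [← hω]
  · rw [pointwiseCondMI_prod hp X Y V Z hω]

theorem condMI_nonneg (hp : ∀ ω, 0 ≤ p ω) (X : Ω → A) (Y : Ω → B) (Z : Ω → C) :
    0 ≤ condMI p X Y Z := by
  have hF : ∑ a : A, ∑ b : B, ∑ c : C, eventMass p (fun ω => X ω = a ∧ Y ω = b ∧ Z ω = c)
      = ∑ ω : Ω, p ω := by
    simpa using sum_eventMass_mul₃ p X Y Z fun _ _ _ => 1
  calc (0 : ℝ) = ∑ a : A, ∑ b : B, ∑ c : C,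
        (eventMass p (fun ω => X ω = a ∧ Y ω = b ∧ Z ω = c) -
          eventMass p (fun ω => X ω = a ∧ Z ω = c) * eventMass p (fun ω => Y ω = b ∧ Z ω = c) /
            eventMass p (fun ω => Z ω = c)) := by
        simp only [Finset.sum_sub_distrib, hF, sum_eventMass_mul_eventMass_div, sub_self]
    _ ≤ condMI p X Y Z :=
        Finset.sum_le_sum fun a _ => Finset.sum_le_sum fun b _ => Finset.sum_le_sum fun c _ =>
          sub_mul_div_le_mul_log (eventMass_nonneg hp _)
            (eventMass_mono hp fun _ h => ⟨h.1, h.2.2⟩)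
            (eventMass_mono hp fun _ h => h.2) (eventMass_mono hp fun _ h => h.2)

theorem condMI_prod_eq_zero_iff (hp : ∀ ω, 0 ≤ p ω)
    (X : Ω → A) (Y : Ω → B) (V : Ω → W) (Z : Ω → C) :
    condMI p X (fun ω => (Y ω, V ω)) Z = 0
      ↔ condMI p X V Z = 0 ∧ condMI p X Y (fun ω => (V ω, Z ω)) = 0 := by
  rw [condMI_prod_eq_add hp]
  exact add_eq_zero_iff_of_nonneg (condMI_nonneg hp _ _ _) (condMI_nonneg hp _ _ _)

end condMI

theorem stmt1_general {Ω A B C D : Type} [Fintype Ω] [Fintype A] [Fintype B] [Fintype C] [Fintype D]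
    [DecidableEq A] [DecidableEq B] [DecidableEq C] [DecidableEq D]
    (p : Ω → ℝ) (hp : ∀ ω, 0 ≤ p ω)
    (v1 : Ω → A) (v2 : Ω → B) (y : Ω → C) (z1 : Ω → D)
    (hrep : condMI p y z1 (fun ω => (v1 ω, v2 ω)) = 0)
    (hred : condMI p y v1 v2 = 0)
    (hsuff : condMI p v1 v2 z1 = 0) :
    condMI p v1 y z1 = 0 := by
  have hy : condMI p y (fun ω => (v1 ω, z1 ω)) v2 = 0 := by
    rw [condMI_prod_comm_right, condMI_prod_eq_zero_iff hp]
    exact ⟨hred, hrep⟩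
  have hv1 : condMI p v1 (fun ω => (v2 ω, y ω)) z1 = 0 := by
    rw [condMI_prod_comm_right, condMI_prod_eq_zero_iff hp, condMI_comm p v1 y,
      condMI_prod_comm_cond]
    exact ⟨hsuff, ((condMI_prod_eq_zero_iff hp _ _ _ _).1 hy).2⟩
  exact ((condMI_prod_eq_zero_iff hp _ _ _ _).1 hv1).1

theorem stmt1 {Ω A B C D : Type} [Fintype Ω] [Fintype A] [Fintype B] [Fintype C] [Fintype D]
    [DecidableEq A] [DecidableEq B] [DecidableEq C] [DecidableEq D]
    (p : Ω → ℝ) (hp : ∀ ω, 0 ≤ p ω) (hp1 : ∑ ω : Ω, p ω = 1)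
    (v1 : Ω → A) (v2 : Ω → B) (y : Ω → C) (z1 : Ω → D)
    (hrep : condMI p y z1 (fun ω => (v1 ω, v2 ω)) = 0)
    (hred : condMI p y v1 v2 = 0)
    (hsuff : condMI p v1 v2 z1 = 0) :
    condMI p v1 y z1 = 0 :=
  stmt1_general p hp v1 v2 y z1 hrep hred hsuff
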